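/- arXiv:2109.14094 — 4 statements merged into one kernel-verified Lean document; each statement's English description precedes it below -/
import Mathlib

section
/- Let A be an n×n real matrix, C a p×n real matrix, and x₀ ∈ ℝ^n. If C A^k x₀ = 0 for every k ∈ {0, 1, …, n−1} (i.e., x₀ lies in the kernel of the observability matrix col(C, CA, …, C A^{n−1})), then C · exp(t A) · x₀ = 0 for all t ∈ ℝ. -/
/-!
By Cayley–Hamilton, the characteristic polynomial of `A` is a monic annihilator of degree `n`, so
dividing by it shows that every polynomial in `A` is a linear combination of `1, A, …, A^(n-1)`.
The subalgebra `ℝ[A]` of polynomials in `A` is finite-dimensional, hence closed, and so contains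
`exp (t • A)`, the limit of its partial sums. The linear map `M ↦ C (M x₀)` vanishes on
`A^k` for `k < n`, hence on all of `ℝ[A]`.
-/

open Matrix NormedSpace Polynomial

theorem Polynomial.Monic.aeval_mem_span_pow {R S : Type*} [CommRing R] [Ring S] [Algebra R S]
    {p : R[X]} (hp : p.Monic) {x : S} (hx : aeval x p = 0) (q : R[X]) :
    aeval x q ∈ Submodule.span R ((x ^ ·) '' Set.Iio p.natDegree) := by
  classical
  nontriviality S
  have := Module.nontrivial R S
  have hrem : q %ₘ p ∈ degreeLT R p.natDegree := by
    rw [mem_degreeLT, ← degree_eq_natDegree hp.ne_zero]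
    exact degree_modByMonic_lt q hp
  rw [degreeLT_eq_span_X_pow] at hrem
  have := Submodule.mem_map_of_mem (f := (aeval x).toLinearMap) hrem
  rw [Submodule.map_span] at this
  simpa [aeval_modByMonic_eq_self_of_root hx, Set.image_image] using this

theorem Algebra.adjoin_singleton_le_span_pow_of_monic {R S : Type*} [CommRing R] [Ring S]
    [Algebra R S] {p : R[X]} (hp : p.Monic) {x : S} (hx : aeval x p = 0) :
    Subalgebra.toSubmodule (Algebra.adjoin R {x}) ≤
      Submodule.span R ((x ^ ·) '' Set.Iio p.natDegree) := by
  rintro _ hy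
  obtain ⟨q, rfl⟩ := (Algebra.adjoin_singleton_eq_range_aeval R x ▸ hy : _)
  exact hp.aeval_mem_span_pow hx q

theorem Matrix.adjoin_singleton_le_span_pow {n R : Type*} [Fintype n] [DecidableEq n]
    [CommRing R] [Nontrivial R] (A : Matrix n n R) :
    Subalgebra.toSubmodule (Algebra.adjoin R {A}) ≤
      Submodule.span R ((A ^ ·) '' Set.Iio (Fintype.card n)) := by
  simpa using Algebra.adjoin_singleton_le_span_pow_of_monic A.charpoly_monic A.aeval_self_charpoly

theorem Subalgebra.exp_mem_of_finiteDimensional {𝕜 𝔸 : Type*} [NontriviallyNormedField 𝕜]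
    [CompleteSpace 𝕜] [CharZero 𝕜] [Ring 𝔸]
    [TopologicalSpace 𝔸] [IsTopologicalRing 𝔸] [T2Space 𝔸] [Algebra 𝕜 𝔸] [ContinuousSMul 𝕜 𝔸]
    (S : Subalgebra 𝕜 𝔸) [FiniteDimensional 𝕜 S] {x : 𝔸} (hx : x ∈ S) : exp x ∈ S := by
  have hS : IsClosed (S : Set 𝔸) := (Subalgebra.toSubmodule S).closed_of_finiteDimensional
  rw [exp_eq_tsum 𝕜]
  exact tsum_mem hS fun k => S.smul_mem (pow_mem hx k) _

/-- If `x₀` lies in the kernel of the observability matrix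
`col(C, CA, …, C A^{n−1})`, i.e. `C A^k x₀ = 0` for all `k < n`, then
`C · exp(t A) · x₀ = 0` for all real `t`. -/
theorem unobservable_initial_condition_invisible_output
    {n p : ℕ} (A : Matrix (Fin n) (Fin n) ℝ) (C : Matrix (Fin p) (Fin n) ℝ)
    (x0 : Fin n → ℝ)
    (h : ∀ k : ℕ, k < n → C.mulVec ((A ^ k).mulVec x0) = 0) :
    ∀ t : ℝ, C.mulVec ((NormedSpace.exp (t • A)).mulVec x0) = 0 := by
  intro t
  let output : Matrix (Fin n) (Fin n) ℝ →ₗ[ℝ] Fin p → ℝ :=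
    C.mulVecLin ∘ₗ LinearMap.applyₗ x0 ∘ₗ Matrix.toLin'.toLinearMap
  have hspan_le_ker : Submodule.span ℝ ((A ^ ·) '' Set.Iio n) ≤ LinearMap.ker output := by
    rw [Submodule.span_le]
    rintro _ ⟨k, hk, rfl⟩
    exact h k hk
  have hexp : exp (t • A) ∈ Algebra.adjoin ℝ {A} :=
    Subalgebra.exp_mem_of_finiteDimensional _
      ((Algebra.adjoin ℝ {A}).smul_mem (Algebra.self_mem_adjoin_singleton ℝ A) t)
  exact hspan_le_ker (by simpa using A.adjoin_singleton_le_span_pow hexp)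
end

section
/- Let A, F, K̄ be n×n real matrices, C a p×n matrix, E an n×q matrix, B an n×m matrix, and h an n×p matrix satisfying: (h C − I) E = 0; F = Ā − K̄ C where Ā = A − h C A; T = I − h C; and K = F h. Let d : ℝ → ℝ^q, u : ℝ → ℝ^m be continuous, and let x, z : ℝ → ℝ^n be differentiable with x'(t) = A x(t) + E d(t) + B u(t), y(t) = C x(t), and z'(t) = F z(t) + (K + K̄) y(t). Define the estimate x̂(t) = z(t) + h y(t) and the error e(t) = x(t) − x̂(t). Then e is differentiable and e'(t) = F e(t) + T B u(t) for all t; in particular, when u ≡ 0 the error dynamics e' = F e are independent of the unknown input d. -/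
open Matrix

lemma hasDerivAt_mulVec {n p : ℕ} (M : Matrix (Fin n) (Fin p) ℝ)
    {f : ℝ → Fin p → ℝ} {f' : Fin p → ℝ} {t : ℝ} (hf : HasDerivAt f f' t) :
    HasDerivAt (fun s => M.mulVec (f s)) (M.mulVec f') t := by
  have := (LinearMap.toContinuousLinearMap
    (Matrix.mulVecLin M)).hasFDerivAt.comp_hasDerivAt t hf
  simpa [Function.comp_def] using this

/-- Unknown-input observer error dynamics. Under the UIO matrix conditions
`(hC − I)E = 0`, `Ā = A − hCA`, `F = Ā − K̄C`, `T = I − hC`, `K = Fh`, the estimation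
error `e = x − (z + h y)` of the observer `z' = F z + (K + K̄) y` for the plant
`x' = A x + E d + B u`, `y = C x` satisfies `e' = F e + T B u`; in particular the error
dynamics are independent of the unknown input `d`. -/
theorem unknown_input_observer_error_dynamics
    {n p q m : ℕ} (A F Abar T : Matrix (Fin n) (Fin n) ℝ)
    (Kbar K : Matrix (Fin n) (Fin p) ℝ)
    (C : Matrix (Fin p) (Fin n) ℝ) (E : Matrix (Fin n) (Fin q) ℝ)
    (B : Matrix (Fin n) (Fin m) ℝ) (h : Matrix (Fin n) (Fin p) ℝ)
    (hE : (h * C - 1) * E = 0)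
    (hAbar : Abar = A - h * C * A)
    (hF : F = Abar - Kbar * C)
    (hT : T = 1 - h * C)
    (hK : K = F * h)
    (d : ℝ → Fin q → ℝ) (u : ℝ → Fin m → ℝ) (hd : Continuous d) (hu : Continuous u)
    (x z : ℝ → Fin n → ℝ)
    (hx : ∀ t : ℝ, HasDerivAt x (A.mulVec (x t) + E.mulVec (d t) + B.mulVec (u t)) t)
    (hz : ∀ t : ℝ, HasDerivAt z (F.mulVec (z t) + (K + Kbar).mulVec (C.mulVec (x t))) t) :
    ∀ t : ℝ, HasDerivAt (fun s : ℝ => x s - (z s + h.mulVec (C.mulVec (x s))))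
      (F.mulVec (x t - (z t + h.mulVec (C.mulVec (x t)))) + (T * B).mulVec (u t)) t := by
  intro t
  have hE' : h * C * E = E := by
    have h0 : h * C * E - E = 0 := by
      rwa [Matrix.sub_mul, Matrix.one_mul] at hE
    exact sub_eq_zero.mp h0
  have hEd : h.mulVec (C.mulVec (E.mulVec (d t))) = E.mulVec (d t) := by
    rw [Matrix.mulVec_mulVec, Matrix.mulVec_mulVec, hE']
  have hder : HasDerivAt (fun s : ℝ => x s - (z s + h.mulVec (C.mulVec (x s))))
      ((A.mulVec (x t) + E.mulVec (d t) + B.mulVec (u t)) -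
        ((F.mulVec (z t) + (K + Kbar).mulVec (C.mulVec (x t))) +
          h.mulVec (C.mulVec (A.mulVec (x t) + E.mulVec (d t) + B.mulVec (u t))))) t := by
    exact (hx t).sub ((hz t).add
      (hasDerivAt_mulVec h (hasDerivAt_mulVec C (hx t))))
  convert hder using 1
  subst hK hF hAbar hT
  simp only [Matrix.mulVec_add, Matrix.mulVec_sub, Matrix.add_mulVec, Matrix.sub_mulVec,
    Matrix.one_mulVec, Matrix.mulVec_mulVec, Matrix.sub_mul, Matrix.add_mul, Matrix.mul_sub,
    Matrix.mul_add, Matrix.one_mul, Matrix.mul_one, Matrix.mul_assoc, hE',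
    ← Matrix.mul_assoc, hEd]
  abel_nf
end

section
/- Let G be a simple graph on the vertex set {1, …, N} with real Laplacian matrix L (L_{ii} = degree of i, L_{ij} = −1 if {i,j} is an edge, 0 otherwise), and let M ⊆ {1, …, N} be a set of monitored vertices. Suppose that for every v in the range of x ↦ L x, if v_i = 0 for all i ∈ M then v = 0 (i.e., the range of L intersects trivially the subspace of vectors vanishing on M). Then every connected component of G that contains at least one edge contains at least one vertex of M. -/
/-!
If no monitored vertex is reachable from an endpoint `i` of an edge `ij`, then the `i`-th column
of the Laplacian vanishes on the monitored vertices, since its support is `i` and the neighbours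
of `i`. By hypothesis the column is then zero, so `Pi.single i 1` lies in the kernel of the
Laplacian and must be constant along edges, which fails on the edge `ij`.
-/

open Matrix

namespace SimpleGraph

theorem lapMatrix_apply_eq_zero_of_not_reachable {V R : Type*} [Fintype V] [DecidableEq V]
    [AddGroupWithOne R] (G : SimpleGraph V) [DecidableRel G.Adj] {i k : V}
    (hik : ¬G.Reachable i k) : G.lapMatrix R k i = 0 := by
  have hki : k ≠ i := fun h => hik (h ▸ Reachable.refl k)
  have hnadj : ¬G.Adj k i := fun h => hik h.symm.reachable
  simp [lapMatrix, degMatrix, hki, hnadj]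

end SimpleGraph

/-- Lemma 4, unit weights: Let `G` be a simple graph on `Fin N` with
Laplacian `L` and `M` a set of monitored vertices. If every vector in the range of
`x ↦ L x` vanishing on `M` is zero, then every connected component of `G` containing
at least one edge contains a monitored vertex. -/
theorem monitored_vertex_in_every_switching_component
    {N : ℕ} (G : SimpleGraph (Fin N)) [DecidableRel G.Adj] (M : Set (Fin N))
    (h : ∀ x : Fin N → ℝ,
      (∀ i ∈ M, (G.lapMatrix ℝ).mulVec x i = 0) → (G.lapMatrix ℝ).mulVec x = 0) :
    ∀ i j : Fin N, G.Adj i j → ∃ k ∈ M, G.Reachable i k := by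
  intro i j hij
  by_contra! hM
  have hker : G.lapMatrix ℝ *ᵥ Pi.single i 1 = 0 := h _ fun k hk => by
    rw [mulVec_single_one]
    exact G.lapMatrix_apply_eq_zero_of_not_reachable (hM k hk)
  have hconst := G.lapMatrix_mulVec_eq_zero_iff_forall_adj.mp hker i j hij
  simp [hij.ne'] at hconst
end

section
/- Let A₁, A₂ be n×n real matrices, C a p×n real matrix, τ₁ > 0, and let O₁ = col(C, C A₁, …, C A₁^{n−1}) and O₂ = col(C, C A₂, …, C A₂^{n−1}) be the observability matrices of (A₁, C) and (A₂, C). Then for x₀ ∈ ℝ^n, the switched output vanishes identically — i.e., C · exp(t A₁) · x₀ = 0 for all t ∈ [0, τ₁] and C · exp(s A₂) · exp(τ₁ A₁) · x₀ = 0 for all s ≥ 0 — if and only if x₀ ∈ ker(O₁) and exp(τ₁ A₁) x₀ ∈ ker(O₂); equivalently x₀ ∈ ker(O₁) ∩ ker(O₂ · exp(τ₁ A₁)). -/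
/-!
The output `t ↦ C exp(t A) x` of a single mode vanishes on an interval `[0, τ]` iff all its
Taylor coefficients `C Aᵏ x` at `0` vanish: differentiating within the interval gives one
direction, the exponential series the other, and by Cayley–Hamilton the powers `k < n` control
all the others. The theorem applies this to mode 1 from `x₀` and to mode 2 from
`exp(τ₁ A₁) x₀`.
-/

open Matrix NormedSpace

section BanachAlgebra

variable {𝔸 E : Type*} [NormedRing 𝔸] [NormedAlgebra ℝ 𝔸] [CompleteSpace 𝔸]
  [NormedAddCommGroup E] [NormedSpace ℝ E]

theorem ContinuousLinearMap.map_exp_smul_eq_zero_of_map_pow_eq_zero (L : 𝔸 →L[ℝ] E)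
    (a : 𝔸) (h : ∀ k, L (a ^ k) = 0) (t : ℝ) : L (exp (t • a)) = 0 := by
  rw [exp_eq_tsum ℝ, L.map_tsum (expSeries_summable' (t • a))]
  simp [smul_pow, h]

/-- Where `L (exp (t • a))` vanishes on `Icc 0 τ`, so does its derivative
`L (a * exp (t • a))`, since `Icc 0 τ` is a set of unique differentiability. -/
theorem ContinuousLinearMap.map_pow_eq_zero_of_map_exp_smul_eq_zero_on_Icc {τ : ℝ}
    (hτ : 0 < τ) (L : 𝔸 →L[ℝ] E) (a : 𝔸)
    (h : ∀ t ∈ Set.Icc 0 τ, L (exp (t • a)) = 0) (k : ℕ) : L (a ^ k) = 0 := by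
  induction k generalizing L with
  | zero => simpa using h 0 ⟨le_rfl, hτ.le⟩
  | succ k ih =>
    have hderiv : ∀ t ∈ Set.Icc 0 τ, (L.comp (mul ℝ 𝔸 a)) (exp (t • a)) = 0 := by
      intro t ht
      have hL : HasDerivWithinAt (fun u : ℝ => L (exp (u • a))) (L (a * exp (t • a)))
          (Set.Icc 0 τ) t :=
        (L.hasFDerivAt.comp_hasDerivAt t (hasDerivAt_exp_smul_const' a t)).hasDerivWithinAt
      have hzero : HasDerivWithinAt (fun u : ℝ => L (exp (u • a))) 0 (Set.Icc 0 τ) t :=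
        (hasDerivWithinAt_const t _ 0).congr h (h t ht)
      exact (uniqueDiffOn_Icc hτ t ht).eq_deriv _ hL hzero
    simpa [pow_succ'] using ih _ hderiv

end BanachAlgebra

theorem Matrix.map_pow_eq_zero_of_forall_lt_card {ι R M : Type*} [Fintype ι]
    [DecidableEq ι] [CommRing R] [Nontrivial R] [AddCommGroup M] [Module R M]
    (L : Matrix ι ι R →ₗ[R] M) (A : Matrix ι ι R)
    (h : ∀ k < Fintype.card ι, L (A ^ k) = 0) (k : ℕ) : L (A ^ k) = 0 := by
  rcases (Fintype.card ι).eq_zero_or_pos with hι | hι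
  · have := Fintype.card_eq_zero_iff.mp hι
    rw [Subsingleton.elim (A ^ k) 0, map_zero]
  have hdeg : (Polynomial.X ^ k %ₘ A.charpoly).natDegree < Fintype.card ι := by
    have hA : A.charpoly ≠ 1 := fun h1 => by
      simpa [h1, hι.ne'] using (A.charpoly_natDegree_eq_dim).symm
    simpa using Polynomial.natDegree_modByMonic_lt _ A.charpoly_monic hA
  rw [pow_eq_aeval_mod_charpoly, Polynomial.aeval_eq_sum_range' hdeg, map_sum]
  exact Finset.sum_eq_zero fun i hi => by
    rw [map_smul, h i (Finset.mem_range.1 hi), smul_zero]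

section Output

variable {ι κ : Type*} [Fintype ι]

/-- `outputCLM C x (exp (t • A))` is the output at time `t` of mode `A` started at `x`. -/
noncomputable def Matrix.outputCLM (C : Matrix κ ι ℝ) (x : ι → ℝ) :
    Matrix ι ι ℝ →L[ℝ] κ → ℝ :=
  LinearMap.toContinuousLinearMap (C.mulVecLin ∘ₗ (mulVecBilin ℝ ℝ).flip x)

variable [DecidableEq ι] [Fintype κ]

-- A normed-algebra structure inducing the product topology, so that `exp` is the same map.
attribute [local instance] Matrix.linftyOpNormedRing Matrix.linftyOpNormedAlgebra

theorem Matrix.mulVec_exp_smul_mulVec_eq_zero_of_forall_lt_card (C : Matrix κ ι ℝ)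
    (A : Matrix ι ι ℝ) (x : ι → ℝ) (h : ∀ k < Fintype.card ι, C *ᵥ (A ^ k *ᵥ x) = 0)
    (t : ℝ) : C *ᵥ (exp (t • A) *ᵥ x) = 0 :=
  (C.outputCLM x).map_exp_smul_eq_zero_of_map_pow_eq_zero A
    (map_pow_eq_zero_of_forall_lt_card (C.outputCLM x).toLinearMap A h) t

theorem Matrix.mulVec_pow_mulVec_eq_zero_of_forall_Icc {τ : ℝ}
    (hτ : 0 < τ) (C : Matrix κ ι ℝ) (A : Matrix ι ι ℝ) (x : ι → ℝ)
    (h : ∀ t ∈ Set.Icc 0 τ, C *ᵥ (exp (t • A) *ᵥ x) = 0) (k : ℕ) :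
    C *ᵥ (A ^ k *ᵥ x) = 0 :=
  (C.outputCLM x).map_pow_eq_zero_of_map_exp_smul_eq_zero_on_Icc hτ A h k

end Output

/-- two-mode Lemma 1(ii): For the switched linear system with one switch
from mode `A₁` to mode `A₂` at time `τ₁ > 0`, the switched output vanishes identically
(`C exp(t A₁) x₀ = 0` on `[0, τ₁]` and `C exp(s A₂) exp(τ₁ A₁) x₀ = 0` for `s ≥ 0`)
iff `x₀ ∈ ker O₁` and `exp(τ₁ A₁) x₀ ∈ ker O₂`, where `Oᵢ` is the observability matrix
of `(Aᵢ, C)`. -/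
theorem switched_output_vanishes_iff_kernels
    {n p : ℕ} (A1 A2 : Matrix (Fin n) (Fin n) ℝ) (C : Matrix (Fin p) (Fin n) ℝ)
    (τ1 : ℝ) (hτ1 : 0 < τ1) (x0 : Fin n → ℝ) :
    ((∀ t ∈ Set.Icc (0 : ℝ) τ1, C.mulVec ((exp (t • A1)).mulVec x0) = 0) ∧
     (∀ s : ℝ, 0 ≤ s →
        C.mulVec ((exp (s • A2)).mulVec ((exp (τ1 • A1)).mulVec x0)) = 0)) ↔
    ((∀ k : ℕ, k < n → C.mulVec ((A1 ^ k).mulVec x0) = 0) ∧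
     (∀ k : ℕ, k < n →
        C.mulVec ((A2 ^ k).mulVec ((exp (τ1 • A1)).mulVec x0)) = 0)) := by
  constructor
  · rintro ⟨h1, h2⟩
    exact ⟨fun k _ => mulVec_pow_mulVec_eq_zero_of_forall_Icc hτ1 C A1 x0 h1 k,
      fun k _ => mulVec_pow_mulVec_eq_zero_of_forall_Icc one_pos C A2 _ (fun s hs => h2 s hs.1) k⟩
  · rintro ⟨h1, h2⟩
    have hcard : Fintype.card (Fin n) = n := Fintype.card_fin n
    exact ⟨fun t _ => mulVec_exp_smul_mulVec_eq_zero_of_forall_lt_card C A1 x0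
        (fun k hk => h1 k (hcard ▸ hk)) t,
      fun s _ => mulVec_exp_smul_mulVec_eq_zero_of_forall_lt_card C A2 _
        (fun k hk => h2 k (hcard ▸ hk)) s⟩
end
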